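/- There do not exist polynomials σ_1, σ_2 ∈ ℝ[x] (one variable) that are finite sums of monomial squares such that (x² − 3/2)² = σ_1·(1 − x²) + σ_2. In particular, Putinar-type representations with sums of monomial squares as multipliers can fail for even polynomials positive on the constraint set, even though f = (x² − 3/2)² is even and strictly positive on [−1, 1]. -/
import Mathlib


open Polynomial

/-- A sum of monomial squares in `ℝ[x]`: a finite sum of squares of real multiples
of monomials. -/
def IsSumMonomialSq1 (p : Polynomial ℝ) : Prop :=
  ∃ (k : ℕ) (a : Fin k → ℝ) (d : Fin k → ℕ),
    p = ∑ i, (Polynomial.monomial (d i) (a i)) ^ 2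

lemma coeff_nonneg_of_sumMonomialSq {p : Polynomial ℝ} (hp : IsSumMonomialSq1 p) (n : ℕ) :
    0 ≤ p.coeff n := by
  obtain ⟨k, a, d, rfl⟩ := hp
  rw [Polynomial.finset_sum_coeff]
  apply Finset.sum_nonneg
  intro i _
  rw [Polynomial.monomial_pow, Polynomial.coeff_monomial]
  split <;> positivity

theorem no_putinar_monomial_sq_representation :
    ¬ ∃ σ₁ σ₂ : Polynomial ℝ, IsSumMonomialSq1 σ₁ ∧ IsSumMonomialSq1 σ₂ ∧
      (X ^ 2 - C (3 / 2 : ℝ)) ^ 2 = σ₁ * (1 - X ^ 2) + σ₂ := by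
  rintro ⟨σ₁, σ₂, h1, h2, h⟩
  have h' : X ^ 4 - C (3 : ℝ) * X ^ 2 + C (9/4 : ℝ)
      = σ₁ - σ₁ * X ^ 2 + σ₂ := by
    rw [mul_sub, mul_one] at h
    rw [← h]; ring_nf
    have e1 : (2 : ℝ[X]) = C 2 := (map_ofNat C 2).symm
    rw [e1, ← C_pow, mul_assoc, ← C_mul]
    norm_num
  have h0 := congrArg (fun p => Polynomial.coeff p 0) h'
  have h2' := congrArg (fun p => Polynomial.coeff p 2) h'
  simp [Polynomial.coeff_mul_X_pow', Polynomial.coeff_X_pow, Polynomial.coeff_one] at h0 h2'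
  have a0 := coeff_nonneg_of_sumMonomialSq h1 0
  have a2 := coeff_nonneg_of_sumMonomialSq h1 2
  have b0 := coeff_nonneg_of_sumMonomialSq h2 0
  have b2 := coeff_nonneg_of_sumMonomialSq h2 2
  linarith
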